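/- arXiv:1905.07983 — 2 statements merged into one kernel-verified Lean document; each statement's English description precedes it below -/
import Mathlib

section
/- Let N ≥ 1, a ≥ 0, b > 0, and set α = a+b−1 and β = b−1 (so α, β > −1). Then the function φ(x) = Π_{1≤i<j≤N}(x_j−x_i) · Π_{j=1}^N (1−x_j)^{(a+b)/2}(1+x_j)^{b/2} attains a unique maximum on the alcove A = {x ∈ ℝ^N : −1 ≤ x_1 ≤ ... ≤ x_N ≤ 1} at the point z = (z_1,...,z_N), where z_1 < ... < z_N are the ordered zeros of the Jacobi polynomial P_N^{(α,β)}. -/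
/-!
Orthogonality makes the Jacobi polynomial an eigenfunction, `L P = μ P`, of
`L R = (1 - x²) R'' + (β - α - (α + β + 2) x) R'`: the operator `L` is symmetric for the Jacobi
weight and does not raise degrees. At a simple zero `z_j` one has
`P''(z_j) = 2 P'(z_j) ∑_{i ≠ j} 1 / (z_j - z_i)`, so the equation evaluated there gives Stieltjes'
relations `∑_{i ≠ j} 1 / (z_j - z_i) = p / (1 - z_j) - q / (1 + z_j)`, `p = (a + b) / 2`,
`q = b / 2`. They say that `z` is a critical point of
`log φ = ∑_{i<j} log (x_j - x_i) + ∑_j (p log (1 - x_j) + q log (1 + x_j))`, a strictly concave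
function on the interior of the alcove. Bounding every logarithm by its tangent line at `z` gives
`φ x < φ z` there, and `φ` vanishes on the boundary.
-/

open MeasureTheory Set Real Polynomial

open Finset in
lemma Finset.sum_filter_lt_add_swap {ι M : Type*} [Fintype ι] [LinearOrder ι] [AddCommMonoid M]
    (f : ι → ι → M) :
    ∑ ij ∈ univ.filter (fun ij : ι × ι => ij.1 < ij.2), (f ij.2 ij.1 + f ij.1 ij.2) =
      ∑ j, ∑ i ∈ univ.erase j, f j i := by
  rw [sum_add_distrib, sum_filter, sum_filter, Fintype.sum_prod_type, Fintype.sum_prod_type,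
    sum_comm, ← sum_add_distrib]
  refine sum_congr rfl fun j _ => ?_
  rw [← sum_add_distrib, ← filter_ne' univ j, sum_filter]
  refine sum_congr rfl fun i _ => ?_
  rcases lt_trichotomy i j with h | rfl | h
  · simp [h, h.ne, h.not_gt]
  · simp
  · simp [h, h.ne', h.not_gt]

lemma Real.log_le_log_add_sub_div {u v : ℝ} (hu : 0 < u) (hv : 0 < v) :
    log v ≤ log u + (v - u) / u := by
  have := log_le_sub_one_of_pos (div_pos hv hu)
  rw [log_div hv.ne' hu.ne'] at this
  rw [sub_div, div_self hu.ne']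
  linarith

lemma Real.log_lt_log_add_sub_div {u v : ℝ} (hu : 0 < u) (hv : 0 < v) (huv : v ≠ u) :
    log v < log u + (v - u) / u := by
  have := log_lt_sub_one_of_pos (div_pos hv hu) (by rwa [ne_eq, div_eq_one_iff_eq hu.ne'])
  rw [log_div hv.ne' hu.ne'] at this
  rw [sub_div, div_self hu.ne']
  linarith

lemma Polynomial.natDegree_mul_iterate_derivative_le {R : Type*} [Semiring R] {p q : R[X]} {k : ℕ}
    (hp : p.natDegree ≤ k) : (p * derivative^[k] q).natDegree ≤ q.natDegree := by
  rcases lt_or_ge q.natDegree k with hq | hq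
  · simp [iterate_derivative_eq_zero hq]
  · exact (natDegree_mul_le_of_le hp (natDegree_iterate_derivative q k)).trans (by omega)

namespace Lagrange

variable {F ι : Type*} [Field F] {s : Finset ι} {v : ι → F}

lemma eq_C_leadingCoeff_mul_nodal {P : F[X]} (hv : Set.InjOn v s) (hdeg : P.natDegree = s.card)
    (hroot : ∀ i ∈ s, P.eval (v i) = 0) : P = C P.leadingCoeff * nodal s v := by
  rcases eq_or_ne P 0 with rfl | hP
  · simp
  have hlc : P.leadingCoeff ≠ 0 := leadingCoeff_ne_zero.2 hP
  refine eq_of_degree_le_of_eval_index_eq s hv ?_ ?_ ?_ ?_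
  · rw [degree_eq_natDegree hP, hdeg]
  · rw [degree_C_mul hlc, degree_nodal, degree_eq_natDegree hP, hdeg]
  · rw [leadingCoeff_C_mul_of_isUnit hlc.isUnit, nodal_monic.leadingCoeff, mul_one]
  · intro i hi
    rw [hroot i hi, eval_mul, eval_nodal_at_node hi, mul_zero]

variable [DecidableEq ι]

lemma eval_derivative_nodal {x : F} (hx : ∀ i ∈ s, x ≠ v i) :
    (derivative (nodal s v)).eval x = (nodal s v).eval x * ∑ i ∈ s, (x - v i)⁻¹ := by
  rw [derivative_nodal, eval_finsetSum, Finset.mul_sum]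
  refine Finset.sum_congr rfl fun i hi => ?_
  rw [nodal_eq_mul_nodal_erase hi, eval_mul, eval_sub, eval_X, eval_C,
    mul_comm (x - v i), mul_assoc, mul_inv_cancel₀ (sub_ne_zero.2 (hx i hi)), mul_one]

lemma eval_derivative_nodal_ne_zero (hv : Set.InjOn v s) {i : ι} (hi : i ∈ s) :
    (derivative (nodal s v)).eval (v i) ≠ 0 := by
  rw [eval_nodal_derivative_eval_node_eq hi]
  exact eval_nodal_not_at_node fun j hj =>
    fun h => (Finset.mem_erase.1 hj).1 (hv (Finset.mem_of_mem_erase hj) hi h.symm)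

lemma eval_derivative_derivative_nodal (hv : Set.InjOn v s) {i : ι} (hi : i ∈ s) :
    (derivative (derivative (nodal s v))).eval (v i) =
      2 * (derivative (nodal s v)).eval (v i) * ∑ j ∈ s.erase i, (v i - v j)⁻¹ := by
  have hne : ∀ j ∈ s.erase i, v i ≠ v j := fun j hj h =>
    (Finset.mem_erase.1 hj).1 (hv (Finset.mem_of_mem_erase hj) hi h.symm)
  rw [eval_nodal_derivative_eval_node_eq hi, mul_assoc, ← eval_derivative_nodal hne,
    nodal_eq_mul_nodal_erase hi, derivative_mul, derivative_X_sub_C, one_mul, derivative_add,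
    derivative_mul, derivative_X_sub_C, one_mul]
  simp only [eval_add, eval_mul, eval_sub, eval_X, eval_C, sub_self, zero_mul, add_zero]
  ring

end Lagrange

noncomputable def jacobiWeight (α β x : ℝ) : ℝ := (1 - x) ^ α * (1 + x) ^ β

section JacobiWeight

variable {α β x : ℝ}

lemma jacobiWeight_pos (hx : x ∈ Ioo (-1) 1) : 0 < jacobiWeight α β x :=
  mul_pos (rpow_pos_of_pos (by linarith [hx.2]) _) (rpow_pos_of_pos (by linarith [hx.1]) _)

lemma continuousOn_jacobiWeight : ContinuousOn (jacobiWeight α β) (Ioo (-1) 1) := by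
  intro x hx
  refine ContinuousAt.continuousWithinAt ?_
  unfold jacobiWeight
  exact ((continuousAt_const.sub continuousAt_id).rpow_const
    (Or.inl (by linarith [hx.2] : (0 : ℝ) < 1 - x).ne')).mul
    ((continuousAt_const.add continuousAt_id).rpow_const
      (Or.inl (by linarith [hx.1] : (0 : ℝ) < 1 + x).ne'))

lemma continuous_jacobiWeight (hα : 0 < α) (hβ : 0 < β) : Continuous (jacobiWeight α β) :=
  ((continuous_rpow_const hα.le).comp (by fun_prop)).mul
    ((continuous_rpow_const hβ.le).comp (by fun_prop))

lemma jacobiWeight_one (hα : α ≠ 0) : jacobiWeight α β 1 = 0 := by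
  simp [jacobiWeight, zero_rpow hα]

lemma jacobiWeight_neg_one (hβ : β ≠ 0) : jacobiWeight α β (-1) = 0 := by
  simp [jacobiWeight, zero_rpow hβ]

lemma jacobiWeight_add_one (hx : x ∈ Ioo (-1) 1) :
    jacobiWeight (α + 1) (β + 1) x = (1 - x ^ 2) * jacobiWeight α β x := by
  rw [jacobiWeight, jacobiWeight, rpow_add_one (by linarith [hx.2]),
    rpow_add_one (by linarith [hx.1])]
  ring

lemma hasDerivAt_jacobiWeight_add_one (hx : x ∈ Ioo (-1) 1) :
    HasDerivAt (jacobiWeight (α + 1) (β + 1))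
      (jacobiWeight α β x * (β - α - (α + β + 2) * x)) x := by
  have h1 : 0 < 1 - x := by linarith [hx.2]
  have h2 : 0 < 1 + x := by linarith [hx.1]
  have := (((hasDerivAt_id x).const_sub 1).rpow_const (p := α + 1) (Or.inl h1.ne')).mul
    (((hasDerivAt_id x).const_add 1).rpow_const (p := β + 1) (Or.inl h2.ne'))
  refine (show HasDerivAt (jacobiWeight (α + 1) (β + 1)) _ x from this).congr_deriv ?_
  simp only [id, add_sub_cancel_right, jacobiWeight]
  rw [rpow_add_one h1.ne', rpow_add_one h2.ne']
  ring

lemma jacobiWeight_le (hx : x ∈ Ioo (-1) 1) :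
    jacobiWeight α β x ≤ 2 ^ |β| * (1 - x) ^ α + 2 ^ |α| * (1 + x) ^ β := by
  have h1 : 0 < 1 - x := by linarith [hx.2]
  have h2 : 0 < 1 + x := by linarith [hx.1]
  have hA := rpow_pos_of_pos h1 α
  have hB := rpow_pos_of_pos h2 β
  rcases le_total 0 x with h | h
  · have : (1 + x) ^ β ≤ 2 ^ |β| :=
      (rpow_le_rpow_of_exponent_le (by linarith) (le_abs_self β)).trans
        (rpow_le_rpow h2.le (by linarith [hx.2]) (abs_nonneg β))
    have := mul_le_mul_of_nonneg_left this hA.le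
    have := mul_pos (rpow_pos_of_pos two_pos |α|) hB
    rw [jacobiWeight]
    linarith
  · have : (1 - x) ^ α ≤ 2 ^ |α| :=
      (rpow_le_rpow_of_exponent_le (by linarith) (le_abs_self α)).trans
        (rpow_le_rpow h1.le (by linarith [hx.1]) (abs_nonneg α))
    have := mul_le_mul_of_nonneg_right this hB.le
    have := mul_pos (rpow_pos_of_pos two_pos |β|) hA
    rw [jacobiWeight]
    linarith

lemma integrableOn_one_sub_rpow (hα : -1 < α) :
    IntegrableOn (fun x : ℝ => (1 - x) ^ α) (Ioo (-1) 1) := by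
  rw [← intervalIntegrable_iff_integrableOn_Ioo_of_le (by norm_num)]
  have := ((intervalIntegral.intervalIntegrable_rpow' hα (a := 0) (b := 2)).comp_sub_left 1).symm
  norm_num at this
  exact this

lemma integrableOn_one_add_rpow (hβ : -1 < β) :
    IntegrableOn (fun x : ℝ => (1 + x) ^ β) (Ioo (-1) 1) := by
  rw [← intervalIntegrable_iff_integrableOn_Ioo_of_le (by norm_num)]
  have := (intervalIntegral.intervalIntegrable_rpow' hβ (a := 0) (b := 2)).comp_add_right 1
  norm_num at this
  simpa only [add_comm] using this

lemma integrableOn_jacobiWeight (hα : -1 < α) (hβ : -1 < β) :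
    IntegrableOn (jacobiWeight α β) (Ioo (-1) 1) := by
  refine Integrable.mono' (((integrableOn_one_sub_rpow hα).const_mul (2 ^ |β|)).add
    ((integrableOn_one_add_rpow hβ).const_mul (2 ^ |α|)))
    (continuousOn_jacobiWeight.aestronglyMeasurable measurableSet_Ioo) ?_
  filter_upwards [ae_restrict_mem measurableSet_Ioo] with x hx
  rw [norm_of_nonneg (jacobiWeight_pos hx).le]
  exact jacobiWeight_le hx

lemma integrableOn_mul_jacobiWeight (hα : -1 < α) (hβ : -1 < β) {f : ℝ → ℝ}
    (hf : Continuous f) :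
    IntegrableOn (fun x => f x * jacobiWeight α β x) (Ioo (-1) 1) := by
  obtain ⟨C, hC⟩ :=
    (isCompact_Icc (a := (-1 : ℝ)) (b := 1)).exists_bound_of_continuousOn hf.continuousOn
  refine Integrable.mono' ((integrableOn_jacobiWeight hα hβ).const_mul C)
    (hf.aestronglyMeasurable.restrict.mul
      (continuousOn_jacobiWeight.aestronglyMeasurable measurableSet_Ioo)) ?_
  filter_upwards [ae_restrict_mem measurableSet_Ioo] with x hx
  rw [norm_mul, norm_of_nonneg (jacobiWeight_pos hx).le]
  exact mul_le_mul_of_nonneg_right (hC x (Ioo_subset_Icc_self hx)) (jacobiWeight_pos hx).le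

end JacobiWeight

noncomputable def jacobiOperator (α β : ℝ) (R : ℝ[X]) : ℝ[X] :=
  (1 - X ^ 2) * derivative (derivative R) + (C (β - α) - C (α + β + 2) * X) * derivative R

lemma natDegree_jacobiOperator_le (α β : ℝ) (R : ℝ[X]) :
    (jacobiOperator α β R).natDegree ≤ R.natDegree :=
  natDegree_add_le_of_degree_le (natDegree_mul_iterate_derivative_le (k := 2) (by compute_degree!))
    (natDegree_mul_iterate_derivative_le (k := 1) (by compute_degree!))

lemma hasDerivAt_jacobiWeight_mul_derivative {α β x : ℝ} (R : ℝ[X]) (hx : x ∈ Ioo (-1) 1) :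
    HasDerivAt (fun y => jacobiWeight (α + 1) (β + 1) y * (derivative R).eval y)
      (jacobiWeight α β x * (jacobiOperator α β R).eval x) x := by
  refine ((hasDerivAt_jacobiWeight_add_one hx).mul
    (Polynomial.hasDerivAt (derivative R) x)).congr_deriv ?_
  rw [jacobiWeight_add_one hx, jacobiOperator]
  simp only [eval_add, eval_mul, eval_sub, eval_one, eval_pow, eval_X, eval_C]
  ring

noncomputable def jacobiInner (α β : ℝ) (R Q : ℝ[X]) : ℝ :=
  ∫ x in Ioo (-1) 1, R.eval x * Q.eval x * jacobiWeight α β x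

section JacobiInner

variable {α β : ℝ}

lemma jacobiInner_comm (R Q : ℝ[X]) : jacobiInner α β R Q = jacobiInner α β Q R := by
  simp only [jacobiInner, mul_comm (R.eval _)]

lemma jacobiInner_C_mul_left (c : ℝ) (R Q : ℝ[X]) :
    jacobiInner α β (C c * R) Q = c * jacobiInner α β R Q := by
  rw [jacobiInner, jacobiInner, ← integral_const_mul]
  simp only [eval_mul, eval_C, mul_assoc]

variable (hα : -1 < α) (hβ : -1 < β)
include hα hβ

lemma integrableOn_eval_mul_eval_mul_jacobiWeight (R Q : ℝ[X]) :
    IntegrableOn (fun x => R.eval x * Q.eval x * jacobiWeight α β x) (Ioo (-1) 1) :=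
  integrableOn_mul_jacobiWeight hα hβ (by fun_prop)

lemma jacobiInner_sub_left (R S Q : ℝ[X]) :
    jacobiInner α β (R - S) Q = jacobiInner α β R Q - jacobiInner α β S Q := by
  rw [jacobiInner, jacobiInner, jacobiInner, ← integral_sub
    (integrableOn_eval_mul_eval_mul_jacobiWeight hα hβ R Q)
    (integrableOn_eval_mul_eval_mul_jacobiWeight hα hβ S Q)]
  simp only [eval_sub, sub_mul]

lemma jacobiInner_self_pos {R : ℝ[X]} (hR : R ≠ 0) : 0 < jacobiInner α β R R := by
  have hint := integrableOn_eval_mul_eval_mul_jacobiWeight hα hβ R R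
  rw [jacobiInner, setIntegral_pos_iff_support_of_nonneg_ae _ hint]
  · have hroots : volume {x | R.IsRoot x} = 0 := (finite_setOfPred_isRoot hR).measure_zero _
    refine lt_of_lt_of_le ?_ (measure_mono (s := Ioo (-1) 1 \ {x | R.IsRoot x}) ?_)
    · rw [measure_sdiff_null hroots, Real.volume_Ioo]
      norm_num
    · rintro x ⟨hx, hroot⟩
      exact ⟨(mul_pos (mul_self_pos.mpr hroot) (jacobiWeight_pos hx)).ne', hx⟩
  · filter_upwards [ae_restrict_mem measurableSet_Ioo] with x hx
    exact mul_nonneg (mul_self_nonneg _) (jacobiWeight_pos hx).le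

lemma jacobiInner_jacobiOperator_left (R Q : ℝ[X]) :
    jacobiInner α β (jacobiOperator α β R) Q =
      -jacobiInner (α + 1) (β + 1) (derivative R) (derivative Q) := by
  have hα₁ : 0 < α + 1 := by linarith
  have hβ₁ : 0 < β + 1 := by linarith
  set f := fun y => jacobiWeight (α + 1) (β + 1) y * (derivative R).eval y * Q.eval y
  set f' := fun y => (jacobiOperator α β R).eval y * Q.eval y * jacobiWeight α β y +
    (derivative R).eval y * (derivative Q).eval y * jacobiWeight (α + 1) (β + 1) y
  have hint₁ := integrableOn_eval_mul_eval_mul_jacobiWeight hα hβ (jacobiOperator α β R) Q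
  have hint₂ := integrableOn_eval_mul_eval_mul_jacobiWeight (by linarith : -1 < α + 1)
    (by linarith : -1 < β + 1) (derivative R) (derivative Q)
  have hderiv : ∀ x ∈ Ioo (-1 : ℝ) 1, HasDerivAt f (f' x) x := fun x hx =>
    ((hasDerivAt_jacobiWeight_mul_derivative R hx).mul (Q.hasDerivAt x)).congr_deriv (by ring)
  have hcont : ContinuousOn f (Icc (-1) 1) :=
    ((continuous_jacobiWeight hα₁ hβ₁).mul (derivative R).continuous).mul
      Q.continuous |>.continuousOn
  have hFTC := intervalIntegral.integral_eq_sub_of_hasDerivAt_of_le (by norm_num) hcont hderiv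
    ((intervalIntegrable_iff_integrableOn_Ioo_of_le (by norm_num)).2 (hint₁.add hint₂))
  rw [intervalIntegral.integral_of_le (by norm_num), integral_Ioc_eq_integral_Ioo,
    integral_add hint₁ hint₂] at hFTC
  simp only [f, jacobiWeight_one hα₁.ne', jacobiWeight_neg_one hβ₁.ne', zero_mul, sub_zero] at hFTC
  rw [jacobiInner, jacobiInner]
  linarith

lemma jacobiInner_jacobiOperator_comm (R Q : ℝ[X]) :
    jacobiInner α β (jacobiOperator α β R) Q = jacobiInner α β R (jacobiOperator α β Q) := by
  rw [jacobiInner_jacobiOperator_left hα hβ, jacobiInner_comm R,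
    jacobiInner_jacobiOperator_left hα hβ, jacobiInner_comm]

/-- For the right `μ`, `L P - μ P` has degree below that of `P` and is orthogonal to itself. -/
lemma exists_jacobiOperator_eq_C_mul {P : ℝ[X]} (hP : P ≠ 0)
    (horth : ∀ Q : ℝ[X], Q.natDegree < P.natDegree → jacobiInner α β P Q = 0) :
    ∃ μ, jacobiOperator α β P = C μ * P := by
  set μ := (jacobiOperator α β P).coeff P.natDegree / P.leadingCoeff
  refine ⟨μ, sub_eq_zero.mp ?_⟩
  by_contra hR
  set R := jacobiOperator α β P - C μ * P
  have hRdeg : R.natDegree < P.natDegree := by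
    rw [natDegree_lt_iff_degree_lt hR, degree_lt_iff_coeff_zero]
    intro m hm
    rcases (show P.natDegree ≤ m by exact_mod_cast hm).eq_or_lt with rfl | hlt
    · rw [coeff_sub, coeff_C_mul, ← leadingCoeff, div_mul_cancel₀ _ (leadingCoeff_ne_zero.2 hP),
        sub_self]
    · rw [coeff_sub, coeff_C_mul, coeff_eq_zero_of_natDegree_lt hlt,
        coeff_eq_zero_of_natDegree_lt ((natDegree_jacobiOperator_le α β P).trans_lt hlt),
        mul_zero, sub_zero]
  have hRR : jacobiInner α β R R = 0 := by
    rw [jacobiInner_sub_left hα hβ, jacobiInner_C_mul_left, jacobiInner_jacobiOperator_comm hα hβ,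
      horth _ ((natDegree_jacobiOperator_le α β R).trans_lt hRdeg),
      horth R hRdeg, mul_zero, sub_zero]
  exact (jacobiInner_self_pos hα hβ hR).ne' hRR

end JacobiInner

lemma sum_inv_sub_eq_of_jacobiInner_eq_zero {α β : ℝ} (hα : -1 < α) (hβ : -1 < β)
    {ι : Type*} [DecidableEq ι] {s : Finset ι} {v : ι → ℝ} {P : ℝ[X]}
    (hdeg : P.natDegree = s.card)
    (horth : ∀ Q : ℝ[X], Q.natDegree < s.card → jacobiInner α β P Q = 0)
    (hv : Set.InjOn v s) (hroot : ∀ i ∈ s, P.eval (v i) = 0) {i : ι} (hi : i ∈ s)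
    (hvi : v i ∈ Ioo (-1) 1) :
    ∑ j ∈ s.erase i, (v i - v j)⁻¹ = (α + 1) / 2 / (1 - v i) - (β + 1) / 2 / (1 + v i) := by
  have hP : P ≠ 0 := by
    rintro rfl
    exact (Finset.card_pos.2 ⟨i, hi⟩).ne (by simpa using hdeg)
  obtain ⟨μ, hμ⟩ := exists_jacobiOperator_eq_C_mul hα hβ hP (by rwa [hdeg])
  have hode : (jacobiOperator α β P).eval (v i) = 0 := by
    rw [hμ, eval_mul, hroot i hi, mul_zero]
  rw [jacobiOperator, Lagrange.eq_C_leadingCoeff_mul_nodal hv hdeg hroot] at hode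
  simp only [derivative_C_mul, eval_add, eval_mul, eval_sub, eval_one, eval_pow, eval_X, eval_C,
    Lagrange.eval_derivative_derivative_nodal hv hi] at hode
  have hlc : P.leadingCoeff ≠ 0 := leadingCoeff_ne_zero.2 hP
  have hV' := Lagrange.eval_derivative_nodal_ne_zero hv hi
  have key : 2 * (1 - v i ^ 2) * ∑ j ∈ s.erase i, (v i - v j)⁻¹ =
      (α + β + 2) * v i + α - β :=
    mul_left_cancel₀ (mul_ne_zero hlc hV') (by linear_combination hode)
  have h₁ : 1 - v i ≠ 0 := by linarith [hvi.2]
  have h₂ : 1 + v i ≠ 0 := by linarith [hvi.1]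
  generalize ∑ j ∈ s.erase i, (v i - v j)⁻¹ = S at key ⊢
  field_simp
  linear_combination key

section WeightedVandermonde

variable {ι : Type*} [Fintype ι] [LinearOrder ι] {p q : ℝ}

noncomputable def weightedVandermonde (p q : ℝ) (x : ι → ℝ) : ℝ :=
  (∏ ij ∈ Finset.univ.filter (fun ij : ι × ι => ij.1 < ij.2), (x ij.2 - x ij.1)) *
    ∏ j, ((1 - x j) ^ p * (1 + x j) ^ q)

/-- The critical-point equations of `log (weightedVandermonde p q)`. -/
def IsElectrostaticEquilibrium (p q : ℝ) (z : ι → ℝ) : Prop :=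
  ∀ j, ∑ i ∈ Finset.univ.erase j, (z j - z i)⁻¹ = p / (1 - z j) - q / (1 + z j)

lemma weightedVandermonde_pos {x : ι → ℝ} (hx : StrictMono x) (hxmem : ∀ i, x i ∈ Ioo (-1) 1) :
    0 < weightedVandermonde p q x :=
  mul_pos (Finset.prod_pos fun ij hij => sub_pos.2 (hx (Finset.mem_filter.1 hij).2))
    (Finset.prod_pos fun j _ => mul_pos (rpow_pos_of_pos (by linarith [(hxmem j).2]) _)
      (rpow_pos_of_pos (by linarith [(hxmem j).1]) _))

lemma log_weightedVandermonde {x : ι → ℝ} (hx : StrictMono x) (hxmem : ∀ i, x i ∈ Ioo (-1) 1) :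
    log (weightedVandermonde p q x) =
      ∑ ij ∈ Finset.univ.filter (fun ij : ι × ι => ij.1 < ij.2), log (x ij.2 - x ij.1) +
        ∑ j, (p * log (1 - x j) + q * log (1 + x j)) := by
  have h₁ : ∀ j, 0 < 1 - x j := fun j => by linarith [(hxmem j).2]
  have h₂ : ∀ j, 0 < 1 + x j := fun j => by linarith [(hxmem j).1]
  rw [weightedVandermonde, log_mul, log_prod, log_prod]
  · simp only [log_mul (rpow_pos_of_pos (h₁ _) _).ne' (rpow_pos_of_pos (h₂ _) _).ne',
      log_rpow (h₁ _), log_rpow (h₂ _)]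
  · exact fun j _ => (mul_pos (rpow_pos_of_pos (h₁ j) _) (rpow_pos_of_pos (h₂ j) _)).ne'
  · exact fun ij hij => (sub_pos.2 (hx (Finset.mem_filter.1 hij).2)).ne'
  · exact (Finset.prod_pos fun ij hij => sub_pos.2 (hx (Finset.mem_filter.1 hij).2)).ne'
  · exact (Finset.prod_pos fun j _ => mul_pos (rpow_pos_of_pos (h₁ j) _)
      (rpow_pos_of_pos (h₂ j) _)).ne'

/-- The derivative of `log (weightedVandermonde p q)` at an equilibrium `z`, in the direction
`x - z`, vanishes. -/
lemma IsElectrostaticEquilibrium.sum_eq_zero {z : ι → ℝ} (hz : IsElectrostaticEquilibrium p q z)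
    (x : ι → ℝ) :
    ∑ ij ∈ Finset.univ.filter (fun ij : ι × ι => ij.1 < ij.2),
        ((x ij.2 - x ij.1) - (z ij.2 - z ij.1)) / (z ij.2 - z ij.1) +
      ∑ j, (p * (((1 - x j) - (1 - z j)) / (1 - z j)) +
        q * (((1 + x j) - (1 + z j)) / (1 + z j))) = 0 := by
  have hpair : ∀ i j, ((x j - x i) - (z j - z i)) / (z j - z i) =
      (x j - z j) / (z j - z i) + (x i - z i) / (z i - z j) := fun i j => by
    rw [← neg_sub (z j) (z i), div_neg, ← sub_eq_add_neg, ← sub_div]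
    ring_nf
  simp only [hpair]
  rw [Finset.sum_filter_lt_add_swap (fun j i => (x j - z j) / (z j - z i)),
    ← Finset.sum_add_distrib]
  refine Finset.sum_eq_zero fun j _ => ?_
  simp only [div_eq_mul_inv, ← Finset.mul_sum]
  rw [← div_eq_mul_inv, hz j]
  ring

lemma weightedVandermonde_eq_zero_of_not_injective {x : ι → ℝ} (hx : ¬Function.Injective x) :
    weightedVandermonde p q x = 0 := by
  obtain ⟨i, j, hxij, hij⟩ := Function.not_injective_iff.1 hx
  refine mul_eq_zero_of_left ?_ _
  rcases hij.lt_or_gt with h | h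
  · exact Finset.prod_eq_zero (i := (i, j)) (by simpa using h) (by simp [hxij])
  · exact Finset.prod_eq_zero (i := (j, i)) (by simpa using h) (by simp [hxij])

lemma weightedVandermonde_eq_zero_of_eq_one_or_eq_neg_one (hp : p ≠ 0) (hq : q ≠ 0) {x : ι → ℝ}
    {j : ι} (hj : x j = 1 ∨ x j = -1) : weightedVandermonde p q x = 0 :=
  mul_eq_zero_of_right _ <| Finset.prod_eq_zero (Finset.mem_univ j) <| by
    rcases hj with h | h <;> simp [h, zero_rpow hp, zero_rpow hq]

lemma mul_log_one_sub_add_mul_log_one_add_le (hp : 0 ≤ p) (hq : 0 ≤ q) {u v : ℝ}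
    (hu : u ∈ Ioo (-1) 1) (hv : v ∈ Ioo (-1) 1) :
    p * log (1 - v) + q * log (1 + v) ≤ p * log (1 - u) + q * log (1 + u) +
      (p * (((1 - v) - (1 - u)) / (1 - u)) + q * (((1 + v) - (1 + u)) / (1 + u))) := by
  have h₁ := mul_le_mul_of_nonneg_left (log_le_log_add_sub_div (u := 1 - u) (v := 1 - v)
    (by linarith [hu.2]) (by linarith [hv.2])) hp
  have h₂ := mul_le_mul_of_nonneg_left (log_le_log_add_sub_div (u := 1 + u) (v := 1 + v)
    (by linarith [hu.1]) (by linarith [hv.1])) hq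
  linarith

lemma mul_log_one_sub_add_mul_log_one_add_lt (hp : 0 ≤ p) (hq : 0 < q) {u v : ℝ}
    (hu : u ∈ Ioo (-1) 1) (hv : v ∈ Ioo (-1) 1) (huv : v ≠ u) :
    p * log (1 - v) + q * log (1 + v) < p * log (1 - u) + q * log (1 + u) +
      (p * (((1 - v) - (1 - u)) / (1 - u)) + q * (((1 + v) - (1 + u)) / (1 + u))) := by
  have h₁ := mul_le_mul_of_nonneg_left (log_le_log_add_sub_div (u := 1 - u) (v := 1 - v)
    (by linarith [hu.2]) (by linarith [hv.2])) hp
  have h₂ := mul_lt_mul_of_pos_left (log_lt_log_add_sub_div (u := 1 + u) (v := 1 + v)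
    (by linarith [hu.1]) (by linarith [hv.1]) (by simpa using huv)) hq
  linarith

lemma weightedVandermonde_lt_of_strictMono (hp : 0 ≤ p) (hq : 0 < q) {z x : ι → ℝ}
    (hz : StrictMono z) (hzmem : ∀ i, z i ∈ Ioo (-1) 1) (heq : IsElectrostaticEquilibrium p q z)
    (hx : StrictMono x) (hxmem : ∀ i, x i ∈ Ioo (-1) 1) (hxz : x ≠ z) :
    weightedVandermonde p q x < weightedVandermonde p q z := by
  rw [← log_lt_log_iff (weightedVandermonde_pos hx hxmem) (weightedVandermonde_pos hz hzmem),
    log_weightedVandermonde hx hxmem, log_weightedVandermonde hz hzmem]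
  have hpair : ∀ ij ∈ Finset.univ.filter (fun ij : ι × ι => ij.1 < ij.2),
      log (x ij.2 - x ij.1) ≤ log (z ij.2 - z ij.1) +
        ((x ij.2 - x ij.1) - (z ij.2 - z ij.1)) / (z ij.2 - z ij.1) := fun ij hij =>
    log_le_log_add_sub_div (sub_pos.2 (hz (Finset.mem_filter.1 hij).2))
      (sub_pos.2 (hx (Finset.mem_filter.1 hij).2))
  obtain ⟨j, hj⟩ := Function.ne_iff.1 hxz
  calc _ < ∑ ij ∈ Finset.univ.filter (fun ij : ι × ι => ij.1 < ij.2), (log (z ij.2 - z ij.1) +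
          ((x ij.2 - x ij.1) - (z ij.2 - z ij.1)) / (z ij.2 - z ij.1)) +
        ∑ j, (p * log (1 - z j) + q * log (1 + z j) + (p * (((1 - x j) - (1 - z j)) / (1 - z j)) +
          q * (((1 + x j) - (1 + z j)) / (1 + z j)))) :=
        add_lt_add_of_le_of_lt (Finset.sum_le_sum hpair) <| Finset.sum_lt_sum
          (fun i _ => mul_log_one_sub_add_mul_log_one_add_le hp hq.le (hzmem i) (hxmem i))
          ⟨j, Finset.mem_univ j,
            mul_log_one_sub_add_mul_log_one_add_lt hp hq (hzmem j) (hxmem j) hj⟩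
    _ = _ := by
      rw [Finset.sum_add_distrib, Finset.sum_add_distrib]
      linear_combination heq.sum_eq_zero x

theorem weightedVandermonde_lt_of_isElectrostaticEquilibrium (hp : 0 < p) (hq : 0 < q)
    {z x : ι → ℝ} (hz : StrictMono z) (hzmem : ∀ i, z i ∈ Ioo (-1) 1)
    (heq : IsElectrostaticEquilibrium p q z) (hx : Monotone x) (hxmem : ∀ i, x i ∈ Icc (-1) 1)
    (hxz : x ≠ z) : weightedVandermonde p q x < weightedVandermonde p q z := by
  by_cases hxinj : Function.Injective x
  swap
  · rw [weightedVandermonde_eq_zero_of_not_injective hxinj]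
    exact weightedVandermonde_pos hz hzmem
  by_cases hxint : ∀ i, x i ∈ Ioo (-1) 1
  · exact weightedVandermonde_lt_of_strictMono hp.le hq hz hzmem heq
      (hx.strictMono_of_injective hxinj) hxint hxz
  · obtain ⟨j, hj⟩ := not_forall.1 hxint
    have hboundary : x j = 1 ∨ x j = -1 := by
      rcases (hxmem j).1.eq_or_lt with h | h
      · exact Or.inr h.symm
      · exact Or.inl ((hxmem j).2.eq_or_lt.resolve_right fun h' => hj ⟨h, h'⟩)
    rw [weightedVandermonde_eq_zero_of_eq_one_or_eq_neg_one hp.ne' hq.ne' hboundary]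
    exact weightedVandermonde_pos hz hzmem

end WeightedVandermonde

theorem jacobi_phi_unique_max_general
    (N : ℕ) (a b : ℝ) (ha : 0 ≤ a) (hb : 0 < b)
    (α β : ℝ) (hα : α = a + b - 1) (hβ : β = b - 1)
    (P : Polynomial ℝ) (hPdeg : P.natDegree = N)
    (hPorth : ∀ Q : Polynomial ℝ, Q.natDegree < N →
      ∫ x in Set.Ioo (-1 : ℝ) 1,
        P.eval x * Q.eval x * (1 - x) ^ α * (1 + x) ^ β = 0)
    (z : Fin N → ℝ) (hzmono : StrictMono z)
    (hzroot : ∀ i, P.eval (z i) = 0)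
    (hzmem : ∀ i, z i ∈ Set.Ioo (-1 : ℝ) 1)
    (A : Set (Fin N → ℝ))
    (hA : A = {x | Monotone x ∧ ∀ i, x i ∈ Set.Icc (-1 : ℝ) 1})
    (φ : (Fin N → ℝ) → ℝ)
    (hφ : φ = fun x =>
      (∏ p ∈ Finset.univ.filter (fun p : Fin N × Fin N => p.1 < p.2), (x p.2 - x p.1)) *
      ∏ j, ((1 - x j) ^ ((a + b) / 2) * (1 + x j) ^ (b / 2)))
    : z ∈ A ∧ ∀ x ∈ A, x ≠ z → φ x < φ z := by
  have hα₁ : -1 < α := by linarith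
  have hβ₁ : -1 < β := by linarith
  have hequil : IsElectrostaticEquilibrium ((a + b) / 2) (b / 2) z := fun j => by
    have := sum_inv_sub_eq_of_jacobiInner_eq_zero hα₁ hβ₁ (s := Finset.univ)
      (by simpa using hPdeg)
      (fun Q hQ => by
        simpa [jacobiInner, jacobiWeight, mul_assoc] using hPorth Q (by simpa using hQ))
      hzmono.injective.injOn (fun i _ => hzroot i) (Finset.mem_univ j) (hzmem j)
    rwa [hα, hβ, sub_add_cancel, sub_add_cancel] at this
  subst hA hφ
  refine ⟨⟨hzmono.monotone, fun i => Ioo_subset_Icc_self (hzmem i)⟩, fun x ⟨hx, hxmem⟩ hxz => ?_⟩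
  exact weightedVandermonde_lt_of_isElectrostaticEquilibrium (by positivity) (by positivity)
    hzmono hzmem hequil hx hxmem hxz

theorem jacobi_phi_unique_max
    (N : ℕ) (hN : 1 ≤ N) (a b : ℝ) (ha : 0 ≤ a) (hb : 0 < b)
    (α β : ℝ) (hα : α = a + b - 1) (hβ : β = b - 1)
    (P : Polynomial ℝ) (hPdeg : P.natDegree = N)
    (hPorth : ∀ Q : Polynomial ℝ, Q.natDegree < N →
      ∫ x in Set.Ioo (-1 : ℝ) 1,
        P.eval x * Q.eval x * (1 - x) ^ α * (1 + x) ^ β = 0)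
    (hPone : P.eval 1 = (∏ j ∈ Finset.range N, (α + 1 + j)) / (N.factorial : ℝ))
    (z : Fin N → ℝ) (hzmono : StrictMono z)
    (hzroot : ∀ i, P.eval (z i) = 0)
    (hzmem : ∀ i, z i ∈ Set.Ioo (-1 : ℝ) 1)
    (A : Set (Fin N → ℝ))
    (hA : A = {x | Monotone x ∧ ∀ i, x i ∈ Set.Icc (-1 : ℝ) 1})
    (φ : (Fin N → ℝ) → ℝ)
    (hφ : φ = fun x =>
      (∏ p ∈ Finset.univ.filter (fun p : Fin N × Fin N => p.1 < p.2), (x p.2 - x p.1)) *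
      ∏ j, ((1 - x j) ^ ((a + b) / 2) * (1 + x j) ^ (b / 2)))
    : z ∈ A ∧ ∀ x ∈ A, x ≠ z → φ x < φ z :=
  jacobi_phi_unique_max_general N a b ha hb α β hα hβ P hPdeg hPorth z hzmono hzroot hzmem A hA φ hφ
end

section
/- Let N ≥ 1 and let z_1 < ... < z_N be the ordered zeros of the physicists' Hermite polynomial H_N. Let S^H be the N×N matrix with entries s^H_{i,i} = 1 + Σ_{l≠i} 1/(z_i−z_l)² and s^H_{i,j} = −1/(z_i−z_j)² for i ≠ j. Then det(S^H) = N!. -/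
/-!
The weight `e^{-x²}` makes `f ↦ f'' - 2xf'` symmetric, so `H'' - 2xH' + 2NH`, which has degree
`< N` because the top coefficients cancel, is orthogonal to every polynomial of degree `< N`,
hence vanishes. Evaluating this equation at the simple zeros of `H = c ∏ (X - z_l)` gives
Stieltjes' relations `∑_{l ≠ i} 1/(z_i - z_l) = z_i`. Since
`(x^m - y^m)/(x - y)² = m x^(m-1)/(x - y) - X^m[x, x, y]`, these relations show that `S^H` maps the
values of `x^m` at the zeros to the values of `(m + 1) x^m + (lower order terms)`. Thus
`S^H V = V U` for the Vandermonde matrix `V` of the zeros and an upper triangular `U` with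
diagonal `1, 2, …, N`, and `det S^H = N!`.
-/

open MeasureTheory Filter Real Finset Topology
open Polynomial Matrix Lagrange

noncomputable def gaussianInner (F G : ℝ[X]) : ℝ :=
  ∫ x, F.eval x * G.eval x * exp (-x ^ 2)

lemma integrable_eval_mul_exp_neg_sq (P : ℝ[X]) :
    Integrable fun x : ℝ => P.eval x * exp (-x ^ 2) := by
  induction P using Polynomial.induction_on' with
  | add p q hp hq =>
    simp only [eval_add, add_mul]
    exact hp.add hq
  | monomial n a =>
    have h := integrable_rpow_mul_exp_neg_mul_sq one_pos (s := n)
      (by linarith [n.cast_nonneg (α := ℝ)])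
    simpa [mul_assoc] using h.const_mul a

lemma integrable_eval_mul_eval_mul_exp_neg_sq (F G : ℝ[X]) :
    Integrable fun x : ℝ => F.eval x * G.eval x * exp (-x ^ 2) := by
  simpa only [eval_mul] using integrable_eval_mul_exp_neg_sq (F * G)

lemma integral_eval_derivative_sub_mul_exp_neg_sq (P : ℝ[X]) :
    ∫ x, (derivative P - C 2 * X * P).eval x * exp (-x ^ 2) = 0 := by
  refine integral_eq_zero_of_hasDerivAt_of_integrable (f := fun x => P.eval x * exp (-x ^ 2))
    (fun x => ?_) (integrable_eval_mul_exp_neg_sq _) (integrable_eval_mul_exp_neg_sq P)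
  have hexp : HasDerivAt (fun x : ℝ => exp (-x ^ 2)) (exp (-x ^ 2) * -(2 * x)) x := by
    simpa using ((hasDerivAt_pow 2 x).neg).exp
  refine ((P.hasDerivAt x).fun_mul hexp).congr_deriv ?_
  simp only [eval_sub, eval_mul, eval_C, eval_X]
  ring

lemma gaussianInner_comm (F G : ℝ[X]) : gaussianInner F G = gaussianInner G F := by
  simp only [gaussianInner, mul_comm (F.eval _)]

lemma gaussianInner_add_left (F₁ F₂ G : ℝ[X]) :
    gaussianInner (F₁ + F₂) G = gaussianInner F₁ G + gaussianInner F₂ G := by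
  simp only [gaussianInner, eval_add, add_mul]
  exact integral_add (integrable_eval_mul_eval_mul_exp_neg_sq _ _)
    (integrable_eval_mul_eval_mul_exp_neg_sq _ _)

lemma gaussianInner_C_mul_left (c : ℝ) (F G : ℝ[X]) :
    gaussianInner (C c * F) G = c * gaussianInner F G := by
  simp only [gaussianInner, eval_mul, eval_C, mul_assoc, integral_const_mul]

lemma eq_zero_of_gaussianInner_self_eq_zero {D : ℝ[X]} (h : gaussianInner D D = 0) : D = 0 := by
  have hnonneg : 0 ≤ fun x : ℝ => D.eval x * D.eval x * exp (-x ^ 2) := fun x =>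
    mul_nonneg (mul_self_nonneg _) (exp_pos _).le
  have hcont : Continuous fun x : ℝ => D.eval x * D.eval x * exp (-x ^ 2) := by fun_prop
  have hzero := (Continuous.ae_eq_iff_eq volume hcont continuous_zero).1
    ((integral_eq_zero_iff_of_nonneg hnonneg (integrable_eval_mul_eval_mul_exp_neg_sq D D)).1 h)
  refine Polynomial.funext fun x => ?_
  have hx := congrFun hzero x
  simpa [(exp_pos _).ne'] using hx

noncomputable def hermiteOperator (P : ℝ[X]) : ℝ[X] :=
  derivative (derivative P) - C 2 * X * derivative P

lemma coeff_hermiteOperator (P : ℝ[X]) (k : ℕ) :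
    (hermiteOperator P).coeff k = (k + 1) * (k + 2) * P.coeff (k + 2) - 2 * k * P.coeff k := by
  rcases k with _ | k
  · simp only [hermiteOperator, coeff_sub, mul_assoc, coeff_C_mul, coeff_X_mul_zero,
      coeff_derivative]
    push_cast
    ring
  · simp only [hermiteOperator, coeff_sub, mul_assoc, coeff_C_mul, coeff_X_mul, coeff_derivative]
    push_cast
    ring

lemma natDegree_hermiteOperator_le (P : ℝ[X]) :
    (hermiteOperator P).natDegree ≤ P.natDegree := by
  refine natDegree_le_iff_coeff_eq_zero.2 fun k hk => ?_
  rw [coeff_hermiteOperator, coeff_eq_zero_of_natDegree_lt hk,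
    coeff_eq_zero_of_natDegree_lt (by omega)]
  ring

lemma gaussianInner_hermiteOperator_left (F G : ℝ[X]) :
    gaussianInner (hermiteOperator F) G = -gaussianInner (derivative F) (derivative G) := by
  have h := integral_eval_derivative_sub_mul_exp_neg_sq (derivative F * G)
  have hsplit : ∀ x : ℝ, (derivative (derivative F * G) - C 2 * X * (derivative F * G)).eval x
      * exp (-x ^ 2) = (hermiteOperator F).eval x * G.eval x * exp (-x ^ 2)
        + (derivative F).eval x * (derivative G).eval x * exp (-x ^ 2) := fun x => by
    simp only [hermiteOperator, derivative_mul, eval_add, eval_sub, eval_mul, eval_C, eval_X]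
    ring
  simp only [hsplit] at h
  rw [integral_add (integrable_eval_mul_eval_mul_exp_neg_sq _ _)
    (integrable_eval_mul_eval_mul_exp_neg_sq _ _)] at h
  rw [gaussianInner, gaussianInner]
  linarith

lemma gaussianInner_hermiteOperator_comm (F G : ℝ[X]) :
    gaussianInner (hermiteOperator F) G = gaussianInner F (hermiteOperator G) := by
  rw [gaussianInner_hermiteOperator_left, gaussianInner_comm F, gaussianInner_hermiteOperator_left,
    gaussianInner_comm]

theorem hermiteOperator_add_eq_zero {N : ℕ} {H : ℝ[X]} (hdeg : H.natDegree = N)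
    (horth : ∀ Q : ℝ[X], Q.natDegree < N → gaussianInner H Q = 0) :
    hermiteOperator H + C (2 * N : ℝ) * H = 0 := by
  set D := hermiteOperator H + C (2 * N : ℝ) * H
  have hD_deg : D.degree < N := by
    refine (degree_lt_iff_coeff_zero D N).2 fun k hk => ?_
    have hk2 : H.coeff (k + 2) = 0 := coeff_eq_zero_of_natDegree_lt (by omega)
    rw [coeff_add, coeff_C_mul, coeff_hermiteOperator, hk2]
    rcases hk.eq_or_lt with rfl | hlt
    · ring
    · rw [coeff_eq_zero_of_natDegree_lt (by omega)]
      ring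
  have hD_orth : ∀ Q : ℝ[X], Q.natDegree < N → gaussianInner D Q = 0 := fun Q hQ => by
    rw [gaussianInner_add_left, gaussianInner_C_mul_left, gaussianInner_hermiteOperator_comm,
      horth _ ((natDegree_hermiteOperator_le Q).trans_lt hQ), horth Q hQ]
    ring
  by_contra hD
  exact hD (eq_zero_of_gaussianInner_self_eq_zero
    (hD_orth D ((natDegree_lt_iff_degree_lt hD).2 hD_deg)))

section Stieltjes

variable {ι K : Type*} [DecidableEq ι] [Field K]

lemma eval_derivative_nodal_eq_mul_sum_inv (s : Finset ι) (v : ι → K) {x : K}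
    (hx : ∀ i ∈ s, x ≠ v i) :
    (derivative (nodal s v)).eval x = (nodal s v).eval x * ∑ i ∈ s, (x - v i)⁻¹ := by
  rw [derivative_nodal, eval_finsetSum, mul_sum]
  refine sum_congr rfl fun i hi => ?_
  have hxi : x - v i ≠ 0 := sub_ne_zero.2 (hx i hi)
  rw [nodal_eq_mul_nodal_erase hi, eval_mul, eval_sub, eval_X, eval_C]
  field_simp

lemma eval_derivative_derivative_nodal_at_node {s : Finset ι} {v : ι → K}
    (hvs : Set.InjOn v s) {i : ι} (hi : i ∈ s) :
    (derivative (derivative (nodal s v))).eval (v i) =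
      2 * (derivative (nodal s v)).eval (v i) * ∑ l ∈ s.erase i, (v i - v l)⁻¹ := by
  have hnode : ∀ l ∈ s.erase i, v i ≠ v l := fun l hl h =>
    (ne_of_mem_erase hl) (hvs (mem_of_mem_erase hl) hi h.symm)
  have hG : derivative (derivative (nodal s v)) = C 2 * derivative (nodal (s.erase i) v) +
      (X - C (v i)) * derivative (derivative (nodal (s.erase i) v)) := by
    rw [nodal_eq_mul_nodal_erase hi]
    simp only [derivative_mul, derivative_add, derivative_sub, derivative_X, derivative_C,
      derivative_one, derivative_zero, map_ofNat]
    ring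
  rw [eval_nodal_derivative_eval_node_eq hi, mul_assoc,
    ← eval_derivative_nodal_eq_mul_sum_inv _ _ hnode, hG]
  simp only [eval_add, eval_mul, eval_sub, eval_X, eval_C, sub_self, zero_mul, add_zero]

/-- Stieltjes' relations for the simple zeros of a solution of `H'' = A H' + B H`. -/
theorem two_mul_sum_inv_sub_eq_eval [Fintype ι] {H A B : K[X]} {z : ι → K}
    (hz : Function.Injective z) (hdeg : H.natDegree = Fintype.card ι)
    (hroot : ∀ i, H.eval (z i) = 0)
    (hode : derivative (derivative H) = A * derivative H + B * H) (i : ι) :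
    2 * ∑ l ∈ univ.erase i, (z i - z l)⁻¹ = A.eval (z i) := by
  have hinj : Set.InjOn z (univ : Finset ι) := hz.injOn
  have hH0 : H ≠ 0 := by
    rintro rfl
    exact (Fintype.card_pos_iff.2 ⟨i⟩).ne (by simpa using hdeg)
  have hH : H = C H.leadingCoeff * nodal univ z := by
    refine eq_of_degree_le_of_eval_index_eq _ hinj ?_ ?_ ?_ ?_
    · rw [degree_eq_natDegree hH0, hdeg, card_univ]
    · rw [degree_C_mul (leadingCoeff_ne_zero.2 hH0), degree_nodal, degree_eq_natDegree hH0, hdeg,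
        card_univ]
    · rw [leadingCoeff_mul, leadingCoeff_C, nodal_monic.leadingCoeff, mul_one]
    · intro j _
      rw [eval_mul, eval_nodal_at_node (mem_univ j), mul_zero, hroot j]
  have hP' : (derivative (nodal univ z)).eval (z i) ≠ 0 := by
    rw [eval_nodal_derivative_eval_node_eq (mem_univ i)]
    exact eval_nodal_not_at_node fun l hl h => (ne_of_mem_erase hl) (hz h).symm
  have hode_i := congrArg (eval (z i)) hode
  rw [hH] at hode_i
  simp only [derivative_C_mul, eval_mul, eval_add, eval_C, eval_nodal_at_node (mem_univ i),
    mul_zero, add_zero, eval_derivative_derivative_nodal_at_node hinj (mem_univ i)] at hode_i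
  have hc := leadingCoeff_ne_zero.2 hH0
  apply mul_left_cancel₀ (mul_ne_zero hc hP')
  linear_combination hode_i

end Stieltjes

section DividedDiff

variable {R : Type*} [CommRing R]

/-- The divided difference `X^m [x, x, y]`. -/
def dividedDiffPow (m : ℕ) (x y : R) : R :=
  ∑ k ∈ range (m - 1), ((k + 1 : ℕ) : R) * x ^ k * y ^ (m - 2 - k)

lemma dividedDiffPow_add_three (n : ℕ) (x y : R) :
    dividedDiffPow (n + 3) x y = y * dividedDiffPow (n + 2) x y + (n + 2) * x ^ (n + 1) := by
  simp only [dividedDiffPow, show n + 3 - 1 = n + 1 + 1 by omega, show n + 2 - 1 = n + 1 by omega,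
    sum_range_succ _ (n + 1), mul_sum]
  congr 1
  · refine sum_congr rfl fun k hk => ?_
    rw [show n + 3 - 2 - k = n + 2 - 2 - k + 1 by have := mem_range.1 hk; omega, pow_succ]
    ring
  · rw [show n + 3 - 2 - (n + 1) = 0 by omega, pow_zero]
    push_cast
    ring

lemma sq_mul_dividedDiffPow (m : ℕ) (x y : R) :
    (x - y) ^ 2 * dividedDiffPow m x y = m * x ^ (m - 1) * (x - y) - (x ^ m - y ^ m) := by
  match m with
  | 0 => simp [dividedDiffPow]
  | 1 => simp [dividedDiffPow]
  | n + 2 =>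
    induction n with
    | zero =>
      simp only [dividedDiffPow, Nat.add_one_sub_one, range_one, sum_singleton, pow_zero]
      push_cast
      ring
    | succ n ih =>
      rw [dividedDiffPow_add_three]
      push_cast at ih ⊢
      linear_combination y * ih

lemma map_dividedDiffPow {S : Type*} [CommRing S] (f : R →+* S) (m : ℕ) (x y : R) :
    f (dividedDiffPow m x y) = dividedDiffPow m (f x) (f y) := by
  simp [dividedDiffPow, map_sum]

lemma degree_dividedDiffPow_X_lt [Nontrivial R] (m : ℕ) {q : R[X]} (hq : q.natDegree ≤ 1) :
    (dividedDiffPow m X q).degree < m := by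
  refine (degree_sum_le _ _).trans_lt ((Finset.sup_lt_iff (WithBot.bot_lt_coe m)).2 fun k hk => ?_)
  have hk : k < m - 1 := mem_range.1 hk
  refine degree_le_natDegree.trans_lt (WithBot.coe_lt_coe.2 ?_)
  calc _ ≤ 0 + k + (m - 2 - k) * 1 :=
        natDegree_mul_le_of_le (natDegree_mul_le_of_le (natDegree_natCast _).le
          (natDegree_X_pow_le k)) (natDegree_pow_le_of_le _ hq)
    _ < m := by omega

end DividedDiff

lemma sum_pow_sub_pow_div_sq {ι K : Type*} [Field K] {s : Finset ι} {x : K} {y : ι → K}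
    (hxy : ∀ l ∈ s, x ≠ y l) (m : ℕ) :
    ∑ l ∈ s, (x ^ m - y l ^ m) / (x - y l) ^ 2 =
      m * x ^ (m - 1) * ∑ l ∈ s, (x - y l)⁻¹ - ∑ l ∈ s, dividedDiffPow m x (y l) := by
  rw [mul_sum, ← sum_sub_distrib]
  refine sum_congr rfl fun l hl => ?_
  have hl : x - y l ≠ 0 := sub_ne_zero.2 (hxy l hl)
  rw [div_eq_iff (pow_ne_zero 2 hl), sub_mul, mul_comm (dividedDiffPow _ _ _),
    sq_mul_dividedDiffPow]
  field_simp
  ring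

section StieltjesMatrix

variable {ι K : Type*} [Fintype ι] [DecidableEq ι] [Field K]

def stieltjesMatrix (z : ι → K) : Matrix ι ι K :=
  Matrix.of fun i j =>
    if i = j then 1 + ∑ l ∈ univ.erase i, 1 / (z i - z l) ^ 2 else -1 / (z i - z j) ^ 2

lemma stieltjesMatrix_mulVec (z : ι → K) (v : ι → K) (i : ι) :
    (stieltjesMatrix z *ᵥ v) i = v i + ∑ l ∈ univ.erase i, (v i - v l) / (z i - z l) ^ 2 := by
  rw [Matrix.mulVec, dotProduct, ← add_sum_erase _ _ (mem_univ i)]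
  have hoff : ∀ l ∈ univ.erase i, stieltjesMatrix z i l * v l = -1 / (z i - z l) ^ 2 * v l :=
    fun l hl => by rw [stieltjesMatrix, of_apply, if_neg (ne_of_mem_erase hl).symm]
  rw [sum_congr rfl hoff, stieltjesMatrix, of_apply, if_pos rfl, add_mul, one_mul, sum_mul,
    add_assoc, ← sum_add_distrib]
  congr 1
  refine sum_congr rfl fun l _ => ?_
  ring

theorem exists_stieltjesMatrix_mulVec_pow {z : ι → K} (hz : Function.Injective z)
    (hrel : ∀ i, ∑ l ∈ univ.erase i, (z i - z l)⁻¹ = z i) (m : ℕ) :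
    ∃ P : K[X], P.natDegree ≤ m ∧ P.coeff m = m + 1 ∧
      stieltjesMatrix z *ᵥ (fun j => z j ^ m) = fun i => P.eval (z i) := by
  set Q : K[X] := ∑ l, dividedDiffPow m X (C (z l)) - dividedDiffPow m X X
  have hQ : Q.degree < m := by
    rw [← mem_degreeLT]
    refine Submodule.sub_mem _ (Submodule.sum_mem _ fun l _ => ?_) ?_ <;>
      rw [mem_degreeLT] <;> apply degree_dividedDiffPow_X_lt
    exacts [(natDegree_C (z l)).trans_le zero_le_one, natDegree_X_le]
  refine ⟨C (m + 1 : K) * X ^ m - Q, ?_, ?_, funext fun i => ?_⟩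
  · exact (natDegree_sub_le_of_le (natDegree_C_mul_X_pow_le _ _)
      (natDegree_le_of_degree_le hQ.le)).trans (max_self m).le
  · rw [coeff_sub, coeff_C_mul_X_pow, if_pos rfl, coeff_eq_zero_of_degree_lt hQ, sub_zero]
  · have hne : ∀ l ∈ univ.erase i, z i ≠ z l := fun l hl h => ne_of_mem_erase hl (hz h).symm
    have hQi : Q.eval (z i) = ∑ l ∈ univ.erase i, dividedDiffPow m (z i) (z l) := by
      simp only [Q, eval_sub, eval_finsetSum, ← coe_evalRingHom, map_dividedDiffPow]
      simp only [coe_evalRingHom, eval_X, eval_C, ← add_sum_erase _ _ (mem_univ i),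
        add_sub_cancel_left]
    have hpow : (m : K) * z i ^ (m - 1) * z i = m * z i ^ m := by
      rcases m with _ | m
      · simp
      · rw [mul_assoc, ← pow_succ, Nat.add_sub_cancel]
    rw [stieltjesMatrix_mulVec, sum_pow_sub_pow_div_sq hne, hrel, eval_sub, hQi, hpow, eval_mul,
      eval_C, eval_X_pow]
    ring

end StieltjesMatrix

theorem det_eq_prod_coeff_of_mulVec_pow {R : Type*} [CommRing R] [IsDomain R] {N : ℕ}
    {z : Fin N → R} (hz : Function.Injective z) (S : Matrix (Fin N) (Fin N) R)
    (P : Fin N → R[X]) (hdeg : ∀ m, (P m).natDegree ≤ m)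
    (hS : ∀ m : Fin N, S *ᵥ (fun j => z j ^ (m : ℕ)) = fun i => (P m).eval (z i)) :
    S.det = ∏ m, (P m).coeff m := by
  set U : Matrix (Fin N) (Fin N) R := Matrix.of fun k m => (P m).coeff k
  have hU : U.IsUpperTriangular := fun k m hmk =>
    coeff_eq_zero_of_natDegree_lt ((hdeg m).trans_lt hmk)
  have hSV : S * Matrix.vandermonde z = Matrix.vandermonde z * U := by
    ext i m
    have hSm := congrFun (hS m) i
    rw [mulVec, dotProduct] at hSm
    rw [mul_apply, mul_apply]
    simp only [vandermonde_apply, U, of_apply]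
    rw [hSm, eval_eq_sum_range' ((hdeg m).trans_lt m.isLt),
      ← Fin.sum_univ_eq_sum_range (fun k => (P m).coeff k * z i ^ k)]
    exact sum_congr rfl fun k _ => mul_comm _ _
  have hV : (Matrix.vandermonde z).det ≠ 0 := Matrix.det_vandermonde_ne_zero_iff.2 hz
  have hdet := congrArg Matrix.det hSV
  rw [Matrix.det_mul, Matrix.det_mul, mul_comm, Matrix.det_of_isUpperTriangular hU] at hdet
  exact mul_left_cancel₀ hV hdet

theorem hermite_matrix_det_general
    (N : ℕ)
    (H : Polynomial ℝ) (hHdeg : H.natDegree = N)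
    (hHorth : ∀ Q : Polynomial ℝ, Q.natDegree < N →
      ∫ x : ℝ, H.eval x * Q.eval x * Real.exp (-x ^ 2) = 0)
    (z : Fin N → ℝ) (hzmono : StrictMono z)
    (hzroot : ∀ i, H.eval (z i) = 0)
    (S : Matrix (Fin N) (Fin N) ℝ)
    (hS : S = Matrix.of fun i j =>
      if i = j then 1 + ∑ l ∈ Finset.univ.erase i, 1 / (z i - z l) ^ 2
      else -1 / (z i - z j) ^ 2) :
    S.det = (N.factorial : ℝ) := by
  have hz := hzmono.injective
  have hode : derivative (derivative H) = C 2 * X * derivative H + C (-(2 * N : ℝ)) * H := by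
    have h := hermiteOperator_add_eq_zero hHdeg hHorth
    rw [hermiteOperator] at h
    rw [C_neg]
    linear_combination h
  have hrel : ∀ i, ∑ l ∈ univ.erase i, (z i - z l)⁻¹ = z i := fun i => by
    have h := two_mul_sum_inv_sub_eq_eval hz (by rw [hHdeg, Fintype.card_fin]) hzroot hode i
    rw [eval_mul, eval_C, eval_X] at h
    linarith
  choose P hPdeg hPcoeff hP using exists_stieltjesMatrix_mulVec_pow hz hrel
  rw [show S = stieltjesMatrix z from hS,
    det_eq_prod_coeff_of_mulVec_pow hz _ (fun m => P m) (fun m => hPdeg m) (fun m => hP m)]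
  simp only [hPcoeff]
  rw [Fin.prod_univ_eq_prod_range (fun m => (m : ℝ) + 1), ← prod_range_add_one_eq_factorial]
  push_cast
  rfl

theorem hermite_matrix_det
    (N : ℕ) (hN : 1 ≤ N)
    (H : Polynomial ℝ) (hHdeg : H.natDegree = N)
    (hHlead : H.leadingCoeff = 2 ^ N)
    (hHorth : ∀ Q : Polynomial ℝ, Q.natDegree < N →
      ∫ x : ℝ, H.eval x * Q.eval x * Real.exp (-x ^ 2) = 0)
    (z : Fin N → ℝ) (hzmono : StrictMono z)
    (hzroot : ∀ i, H.eval (z i) = 0)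
    (S : Matrix (Fin N) (Fin N) ℝ)
    (hS : S = Matrix.of fun i j =>
      if i = j then 1 + ∑ l ∈ Finset.univ.erase i, 1 / (z i - z l) ^ 2
      else -1 / (z i - z j) ^ 2) :
    S.det = (N.factorial : ℝ) :=
  hermite_matrix_det_general N H hHdeg hHorth z hzmono hzroot S hS
end
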